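/- For an infinite set I, the matrix algebra M_I(ℂ) is pseudo-amenable but not strong pseudo-amenable. -/

import Mathlib

/-!
Pseudo-amenability: fix `i₀ : I` and let `m_G = ∑_{i ∈ G} e_{i i₀} ⊗ e_{i₀ i}` for finite `G ⊆ I`.
Once `j, k ∈ G`, `m_G` commutes exactly with `e_{jk}`, and `π(m_G) = ∑_{i ∈ G} e_{ii}` fixes `e_{jk}`
from the left. Thanks to the `ℓ¹`-norm, both `a ↦ a·m_G - m_G·a` and `a ↦ π(m_G)a - a` are bounded
by `2‖a‖` uniformly in `G`, so convergence on the dense span of the matrix units gives convergence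
everywhere.

Failure of strong pseudo-amenability: if `Φ ∈ M_I**` commutes with every `e_{kl}`, testing the
commutation against the coordinate functionals `ε_{ij}*` shows that `Φ` takes one value `c` on all
the diagonal ones. Since `∑_{i ∈ S} ε_{ii}*` has norm at most `1` for every finite `S` and `I` is
infinite, `|S| |c| ≤ ‖Φ‖` forces `c = 0`. Hence `(Φ·e_{kk})(ε_{kk}*) = 0` while
`e_{kk}(ε_{kk}*) = 1`, so `Φ·e_{kk}` stays at distance at least `1` from `e_{kk}`.
-/

noncomputable section

open ContinuousLinearMap NormedSpace

/-- A directed index system for nets. -/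
structure DirSys : Type 1 where
  ι : Type
  le : ι → ι → Prop
  refl : ∀ i, le i i
  trans : ∀ {i j k}, le i j → le j k → le i k
  nonempty : Nonempty ι
  directed : ∀ i j, ∃ k, le i k ∧ le j k

/-- Convergence of a net indexed by a directed system, in a (pseudo)metric space. -/
def DirSys.Tendsto (D : DirSys) {X : Type*} [PseudoMetricSpace X] (m : D.ι → X) (x : X) : Prop :=
  ∀ ε : ℝ, 0 < ε → ∃ i, ∀ j, D.le i j → dist (m j) x < ε

variable (A : Type*) [NonUnitalNormedRing A] [NormedSpace ℂ A]
  [IsScalarTower ℂ A A] [SMulCommClass ℂ A A]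

/-- The continuous bilinear forms on `A`, i.e. the dual space of the projective tensor
product `A ⊗̂ A`. -/
abbrev BilForms := A →L[ℂ] StrongDual ℂ A

/-- The bidual `(A ⊗̂ A)**` of the projective tensor product, realized concretely as the
dual space of the space of continuous bilinear forms on `A` (the latter being canonically,
isometrically, the dual of `A ⊗̂ A`). -/
abbrev TensorBidual := StrongDual ℂ (BilForms A)

instance : NormedAddCommGroup (TensorBidual A) :=
  ContinuousLinearMap.toNormedAddCommGroup (𝕜 := ℂ) (𝕜₂ := ℂ) (σ₁₂ := RingHom.id ℂ)
    (E := BilForms A) (F := ℂ)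

instance : NormedSpace ℂ (TensorBidual A) :=
  ContinuousLinearMap.toNormedSpace (𝕜 := ℂ) (𝕜₂ := ℂ) (σ₁₂ := RingHom.id ℂ)
    (E := BilForms A) (F := ℂ)

/-- The bidual `A**` of `A`. -/
abbrev Bidual := StrongDual ℂ (StrongDual ℂ A)

variable {A}

/-- The elementary tensor `x ⊗ y`, viewed inside `(A ⊗̂ A)**` via the canonical isometric
embedding of `A ⊗̂ A` into its bidual. -/
def elemT (x y : A) : TensorBidual A :=
  (ContinuousLinearMap.apply ℂ ℂ y).comp (ContinuousLinearMap.apply ℂ (StrongDual ℂ A) x)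

variable (A)

/-- The canonical isometric copy of `A ⊗̂ A` inside its bidual: the closure of the linear
span of the elementary tensors. -/
def ptp : Submodule ℂ (TensorBidual A) :=
  (Submodule.span ℂ {m : TensorBidual A | ∃ x y : A, m = elemT x y}).topologicalClosure

/-- The map `f ↦ f·a` on bilinear forms, `(f·a)(x,y) = f(ax, y)`; predual of the left
module action of `A` on `(A ⊗̂ A)**`. -/
def leftBil (a : A) : BilForms A →L[ℂ] BilForms A :=
  (compL ℂ A A (StrongDual ℂ A)).flip (ContinuousLinearMap.mul ℂ A a)

/-- The map `f ↦ a·f` on bilinear forms, `(a·f)(x,y) = f(x, ya)`; predual of the right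
module action of `A` on `(A ⊗̂ A)**`. -/
def rightBil (a : A) : BilForms A →L[ℂ] BilForms A :=
  compL ℂ A (StrongDual ℂ A) (StrongDual ℂ A)
    ((compL ℂ A A ℂ).flip ((ContinuousLinearMap.mul ℂ A).flip a))

variable {A}

/-- The left module action `a · m` of `A` on `(A ⊗̂ A)**`, extending
`a · (x ⊗ y) = (a x) ⊗ y`. -/
def tsmulL (a : A) (m : TensorBidual A) : TensorBidual A := m.comp (leftBil A a)

/-- The right module action `m · a` of `A` on `(A ⊗̂ A)**`, extending
`(x ⊗ y) · a = x ⊗ (y a)`. -/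
def tsmulR (a : A) (m : TensorBidual A) : TensorBidual A := m.comp (rightBil A a)

variable (A)

/-- The adjoint `π_A* : A* → (A ⊗̂ A)*` of the product morphism `π_A`, namely
`(π_A* f)(x, y) = f (x y)`. -/
def piStar : StrongDual ℂ A →L[ℂ] BilForms A :=
  ((compL ℂ A (A →L[ℂ] A) (StrongDual ℂ A)).flip (ContinuousLinearMap.mul ℂ A)).comp
    (compL ℂ A A ℂ)

variable {A}

/-- The second adjoint `π_A** : (A ⊗̂ A)** → A**` of the product morphism. -/
def piSS (m : TensorBidual A) : Bidual A := m.comp (piStar A)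

variable (A)

/-- The map `f ↦ f·a` on `A*`, `(f·a)(x) = f(ax)`. -/
def dualROp (a : A) : StrongDual ℂ A →L[ℂ] StrongDual ℂ A :=
  (compL ℂ A A ℂ).flip (ContinuousLinearMap.mul ℂ A a)

/-- The map `f ↦ a·f` on `A*`, `(a·f)(x) = f(xa)`. -/
def dualLOp (a : A) : StrongDual ℂ A →L[ℂ] StrongDual ℂ A :=
  (compL ℂ A A ℂ).flip ((ContinuousLinearMap.mul ℂ A).flip a)

variable {A}

/-- The product `a · Φ` of `a ∈ A` and `Φ ∈ A**`: `(a·Φ)(f) = Φ(f·a)`. -/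
def bsmulL (a : A) (Φ : Bidual A) : Bidual A := Φ.comp (dualROp A a)

/-- The product `Φ · a` of `Φ ∈ A**` and `a ∈ A`: `(Φ·a)(f) = Φ(a·f)`. -/
def bsmulR (a : A) (Φ : Bidual A) : Bidual A := Φ.comp (dualLOp A a)

/-- The canonical isometric embedding of `A` into its bidual. -/
def inclB (a : A) : Bidual A := NormedSpace.inclusionInDoubleDual ℂ A a

variable (A)

/-- A Banach algebra `A` is *strong pseudo-amenable* if there is a (not necessarily bounded)
net `(m_α)` in `(A ⊗̂ A)**` such that `a·m_α − m_α·a → 0` and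
`a·π_A**(m_α) = π_A**(m_α)·a → a` for every `a ∈ A`. -/
def StrongPseudoAmenable : Prop :=
  ∃ (D : DirSys) (m : D.ι → TensorBidual A),
    (∀ a : A, D.Tendsto (fun α => tsmulL a (m α) - tsmulR a (m α)) 0) ∧
    (∀ (a : A) (α : D.ι), bsmulL a (piSS (m α)) = bsmulR a (piSS (m α))) ∧
    (∀ a : A, D.Tendsto (fun α => bsmulR a (piSS (m α))) (inclB a))

/-- A Banach algebra `A` is *pseudo-amenable* if there is a (not necessarily bounded)
net `(m_α)` in `A ⊗̂ A` such that `a·m_α − m_α·a → 0` and `π_A(m_α)a → a` for every `a ∈ A`. -/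
def PseudoAmenable : Prop :=
  ∃ (D : DirSys) (m : D.ι → TensorBidual A),
    (∀ α, m α ∈ ptp A) ∧
    (∀ a : A, D.Tendsto (fun α => tsmulL a (m α) - tsmulR a (m α)) 0) ∧
    (∀ a : A, D.Tendsto (fun α => bsmulR a (piSS (m α))) (inclB a))

/-- A Banach algebra `A` is *pseudo-contractible* if there is a net `(m_α)` in `A ⊗̂ A`
such that `a·m_α = m_α·a` and `π_A(m_α)a → a` for every `a ∈ A`. -/
def PseudoContractible : Prop :=
  ∃ (D : DirSys) (m : D.ι → TensorBidual A),
    (∀ α, m α ∈ ptp A) ∧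
    (∀ (a : A) (α : D.ι), tsmulL a (m α) = tsmulR a (m α)) ∧
    (∀ a : A, D.Tendsto (fun α => bsmulR a (piSS (m α))) (inclB a))

/-- A Banach algebra `A` is *amenable* if it has a bounded approximate diagonal: a bounded
net `(m_α)` in `A ⊗̂ A` such that `a·m_α − m_α·a → 0` and `π_A(m_α)a → a` for every `a ∈ A`. -/
def AmenableBanachAlgebra : Prop :=
  ∃ (D : DirSys) (m : D.ι → TensorBidual A) (C : ℝ),
    (∀ α, m α ∈ ptp A) ∧
    (∀ α, ‖m α‖ ≤ C) ∧
    (∀ a : A, D.Tendsto (fun α => tsmulL a (m α) - tsmulR a (m α)) 0) ∧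
    (∀ a : A, D.Tendsto (fun α => bsmulR a (piSS (m α))) (inclB a))

end

/-- `(M, e)` is a realization of the Banach algebra `M_I(ℂ)` of `I × I` complex matrices
with finite `ℓ¹`-norm: the `e i j` are the standard matrix units `ε_{i,j}`, finite linear
combinations of them carry the `ℓ¹`-norm, and they have dense linear span. -/
def IsMatrixUnitsL1 (I : Type) [DecidableEq I] (M : Type)
    [NonUnitalNormedRing M] [NormedSpace ℂ M] (e : I → I → M) : Prop :=
  (∀ i j k l : I, e i j * e k l = if j = k then e i l else 0) ∧
  (∀ (s : Finset (I × I)) (c : I × I → ℂ),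
      ‖∑ p ∈ s, c p • e p.1 p.2‖ = ∑ p ∈ s, ‖c p‖) ∧
  ((Submodule.span ℂ (Set.range fun p : I × I => e p.1 p.2)).topologicalClosure = ⊤)


open Filter Topology Finset

namespace DirSys

def ofSemilatticeSup (α : Type) [SemilatticeSup α] [Nonempty α] : DirSys where
  ι := α
  le := (· ≤ ·)
  refl := le_refl
  trans := le_trans
  nonempty := ‹_›
  directed i j := ⟨i ⊔ j, le_sup_left, le_sup_right⟩

theorem tendsto_ofSemilatticeSup_iff {α : Type} [SemilatticeSup α] [Nonempty α] {X : Type*}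
    [PseudoMetricSpace X] {m : α → X} {x : X} :
    (ofSemilatticeSup α).Tendsto m x ↔ Filter.Tendsto m atTop (𝓝 x) :=
  (Metric.tendsto_atTop (β := α)).symm

end DirSys

theorem tendsto_zero_of_dense_span {𝕜 E F ι : Type*} [NontriviallyNormedField 𝕜]
    [SeminormedAddCommGroup E] [NormedSpace 𝕜 E] [SeminormedAddCommGroup F] [NormedSpace 𝕜 F]
    {l : Filter ι} {T : ι → E →ₗ[𝕜] F} {C : ℝ} (hT : ∀ k x, ‖T k x‖ ≤ C * ‖x‖)
    {s : Set E} (hs : Dense (Submodule.span 𝕜 s : Set E))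
    (h : ∀ x ∈ s, Tendsto (T · x) l (𝓝 0)) (x : E) : Tendsto (T · x) l (𝓝 0) := by
  let V : Submodule 𝕜 E :=
    { carrier := {x | Tendsto (T · x) l (𝓝 0)}
      add_mem' := fun hx hy => by simpa using hx.add hy
      zero_mem' := by simpa using tendsto_const_nhds
      smul_mem' := fun c x hx => by simpa using hx.const_smul c }
  have hequi : Equicontinuous fun k => ((T k).mkContinuous C (hT k) : E → F) :=
    ((NormedSpace.equicontinuous_TFAE fun k => (T k).mkContinuous C (hT k)).out 3 1).mp
      (⟨C, fun k x => by simpa using hT k x⟩ :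
        ∃ D : ℝ, ∀ k x, ‖(T k).mkContinuous C (hT k) x‖ ≤ D * ‖x‖)
  have hV : IsClosed (V : Set E) := hequi.isClosed_setOfPred_tendsto continuous_const
  exact hs.induction (P := (· ∈ V)) (fun y hy => (Submodule.span_le (p := V)).mpr h hy) hV x

section ElementaryTensors

variable {A : Type*} [NonUnitalNormedRing A] [NormedSpace ℂ A]

theorem elemT_ite_left (P : Prop) [Decidable P] (x y : A) :
    elemT (if P then x else 0) y = if P then elemT x y else 0 := by
  split_ifs <;> ext <;> simp [elemT]

theorem elemT_ite_right (P : Prop) [Decidable P] (x y : A) :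
    elemT x (if P then y else 0) = if P then elemT x y else 0 := by
  split_ifs <;> ext <;> simp [elemT]

theorem norm_elemT_le (x y : A) : ‖elemT x y‖ ≤ ‖x‖ * ‖y‖ := by
  refine ContinuousLinearMap.opNorm_le_bound _ (by positivity) fun F => ?_
  calc ‖F x y‖ ≤ ‖F x‖ * ‖y‖ := (F x).le_opNorm y
    _ ≤ ‖F‖ * ‖x‖ * ‖y‖ := by gcongr; exact F.le_opNorm x
    _ = ‖x‖ * ‖y‖ * ‖F‖ := by ring

theorem inclB_sum {ι : Type*} (s : Finset ι) (f : ι → A) :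
    inclB (∑ i ∈ s, f i) = ∑ i ∈ s, inclB (f i) :=
  map_sum (NormedSpace.inclusionInDoubleDual ℂ A) f s

end ElementaryTensors

section ModuleActions

variable {A : Type*} [NonUnitalNormedRing A] [NormedSpace ℂ A] [IsScalarTower ℂ A A]
  [SMulCommClass ℂ A A]

theorem tsmulL_elemT (a x y : A) : tsmulL a (elemT x y) = elemT (a * x) y := rfl

theorem tsmulR_elemT (a x y : A) : tsmulR a (elemT x y) = elemT x (y * a) := rfl

theorem piSS_elemT (x y : A) : piSS (elemT x y) = inclB (x * y) := rfl

theorem bsmulR_inclB (a b : A) : bsmulR a (inclB b) = inclB (b * a) := rfl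

theorem tsmulL_sum {ι : Type*} (a : A) (s : Finset ι) (m : ι → TensorBidual A) :
    tsmulL a (∑ i ∈ s, m i) = ∑ i ∈ s, tsmulL a (m i) := by
  ext F; simp [tsmulL]

theorem tsmulR_sum {ι : Type*} (a : A) (s : Finset ι) (m : ι → TensorBidual A) :
    tsmulR a (∑ i ∈ s, m i) = ∑ i ∈ s, tsmulR a (m i) := by
  ext F; simp [tsmulR]

theorem piSS_sum {ι : Type*} (s : Finset ι) (m : ι → TensorBidual A) :
    piSS (∑ i ∈ s, m i) = ∑ i ∈ s, piSS (m i) := by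
  ext F; simp [piSS]

noncomputable def commutatorMap (m : TensorBidual A) : A →ₗ[ℂ] TensorBidual A where
  toFun a := tsmulL a m - tsmulR a m
  map_add' a b := by
    simp only [tsmulL, tsmulR, leftBil, rightBil, map_add,
      ContinuousLinearMap.comp_add]
    abel
  map_smul' c a := by
    simp only [tsmulL, tsmulR, leftBil, rightBil, map_smul,
      ContinuousLinearMap.comp_smul, RingHom.id_apply, smul_sub]

theorem commutatorMap_apply (m : TensorBidual A) (a : A) :
    commutatorMap m a = tsmulL a m - tsmulR a m := rfl

end ModuleActions

noncomputable def diagonalNet {I M : Type} [NonUnitalNormedRing M] [NormedSpace ℂ M]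
    (e : I → I → M) (i₀ : I) (G : Finset I) : TensorBidual M :=
  ∑ i ∈ G, elemT (e i i₀) (e i₀ i)

namespace IsMatrixUnitsL1

section NormedSpace

variable {I : Type} [DecidableEq I] {M : Type} [NonUnitalNormedRing M] [NormedSpace ℂ M]
  {e : I → I → M} (hM : IsMatrixUnitsL1 I M e)
include hM

theorem norm_unit (i j : I) : ‖e i j‖ = 1 := by
  simpa using hM.2.1 {(i, j)} fun _ => 1

theorem dense_span : Dense (Submodule.span ℂ (Set.range fun p : I × I => e p.1 p.2) : Set M) :=
  Submodule.dense_iff_topologicalClosure_eq_top.mpr hM.2.2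

theorem induction_on {P : M → Prop} (hP : IsClosed {x | P x})
    (h : ∀ (s : Finset (I × I)) (c : I × I → ℂ), P (∑ p ∈ s, c p • e p.1 p.2)) (x : M) : P x :=
  hM.dense_span.induction (fun y hy => by
    obtain ⟨c, rfl⟩ := Finsupp.mem_span_range_iff_exists_finsupp.mp hy
    exact h c.support c) hP x

theorem dual_ext {f g : StrongDual ℂ M} (h : ∀ i j, f (e i j) = g (e i j)) : f = g :=
  ContinuousLinearMap.ext_on hM.dense_span (by rintro _ ⟨p, rfl⟩; exact h p.1 p.2)

theorem linearIndependent : LinearIndependent ℂ (fun p : I × I => e p.1 p.2) := by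
  refine linearIndependent_iff'.mpr fun s c hc p hp => norm_eq_zero.mp ?_
  have hnorm := hM.2.1 s c
  rw [hc, norm_zero, eq_comm, sum_eq_zero_iff_of_nonneg fun _ _ => norm_nonneg _] at hnorm
  exact hnorm p hp

theorem sum_norm_le_of_units {ι E : Type*} [SeminormedAddCommGroup E] [NormedSpace ℂ E]
    (L : ι → M →L[ℂ] E) (G : Finset ι) {C : ℝ}
    (hL : ∀ i j, ∑ k ∈ G, ‖L k (e i j)‖ ≤ C) (x : M) : ∑ k ∈ G, ‖L k x‖ ≤ C * ‖x‖ := by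
  have hclosed : IsClosed {x : M | ∑ k ∈ G, ‖L k x‖ ≤ C * ‖x‖} :=
    isClosed_le (by fun_prop) (by fun_prop)
  refine hM.induction_on hclosed (fun s c => ?_) x
  calc ∑ k ∈ G, ‖L k (∑ p ∈ s, c p • e p.1 p.2)‖
      ≤ ∑ k ∈ G, ∑ p ∈ s, ‖c p‖ * ‖L k (e p.1 p.2)‖ := by
        refine sum_le_sum fun k _ => ?_
        rw [map_sum]
        refine (norm_sum_le _ _).trans_eq ?_
        simp only [map_smul, norm_smul]
    _ = ∑ p ∈ s, ‖c p‖ * ∑ k ∈ G, ‖L k (e p.1 p.2)‖ := by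
        rw [sum_comm]; simp only [mul_sum]
    _ ≤ ∑ p ∈ s, ‖c p‖ * C :=
        sum_le_sum fun p _ => mul_le_mul_of_nonneg_left (hL p.1 p.2) (norm_nonneg _)
    _ = C * ‖∑ p ∈ s, c p • e p.1 p.2‖ := by rw [hM.2.1, mul_sum]; simp only [mul_comm]

theorem exists_dual_of_norm_le_one (g : I × I → ℂ) (hg : ∀ p, ‖g p‖ ≤ 1) :
    ∃ f : StrongDual ℂ M, ‖f‖ ≤ 1 ∧ ∀ i j, f (e i j) = g (i, j) := by
  set S := Submodule.span ℂ (Set.range fun p : I × I => e p.1 p.2)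
  let b : Module.Basis (I × I) ℂ S := .span hM.linearIndependent
  have hb : ∀ p, (b p : M) = e p.1 p.2 := fun p =>
    congrArg Subtype.val (Module.Basis.span_apply hM.linearIndependent p)
  let f₀ : S →ₗ[ℂ] ℂ := b.constr ℂ g
  have hf₀ : ∀ x : S, ‖f₀ x‖ ≤ 1 * ‖x‖ := by
    rintro ⟨x, hx⟩
    obtain ⟨c, rfl⟩ := Finsupp.mem_span_range_iff_exists_finsupp.mp hx
    have hx' : (⟨_, hx⟩ : S) = ∑ p ∈ c.support, c p • b p := Subtype.ext (by simp [hb, Finsupp.sum])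
    rw [hx', one_mul, Submodule.coe_norm]
    simp only [map_sum, map_smul, Module.Basis.constr_basis, f₀, Submodule.coe_sum,
      Submodule.coe_smul, hb, hM.2.1, smul_eq_mul]
    refine (norm_sum_le _ _).trans (sum_le_sum fun p _ => ?_)
    simpa [norm_mul] using mul_le_mul_of_nonneg_left (hg p) (norm_nonneg (c p))
  obtain ⟨f, hfext, hfnorm⟩ := exists_extension_norm_eq S (f₀.mkContinuous 1 hf₀)
  refine ⟨f, hfnorm ▸ LinearMap.mkContinuous_norm_le f₀ zero_le_one hf₀, fun i j => ?_⟩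
  have := hfext (b (i, j))
  rw [hb] at this
  simpa [f₀] using this

noncomputable def coordDual (i j : I) : StrongDual ℂ M :=
  (hM.exists_dual_of_norm_le_one (Pi.single (i, j) 1) fun p => by
    by_cases h : p = (i, j) <;> simp [h]).choose

theorem norm_coordDual_le (i j : I) : ‖hM.coordDual i j‖ ≤ 1 := by
  unfold coordDual; generalize_proofs h; exact h.choose_spec.1

theorem coordDual_apply_unit (i j k l : I) :
    hM.coordDual i j (e k l) = if i = k ∧ j = l then 1 else 0 := by
  unfold coordDual; generalize_proofs h; rw [h.choose_spec.2]
  simp [Pi.single_apply, Prod.ext_iff, eq_comm]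

theorem norm_sum_coordDual_diag_le (S : Finset I) : ‖∑ i ∈ S, hM.coordDual i i‖ ≤ 1 := by
  obtain ⟨f, hf, hfe⟩ := hM.exists_dual_of_norm_le_one
    (fun p => if p.1 = p.2 ∧ p.1 ∈ S then 1 else 0) fun p => by split_ifs <;> simp
  convert hf
  refine hM.dual_ext fun k l => ?_
  by_cases hkl : k = l
  · subst hkl; simp [hfe, coordDual_apply_unit]
  · simp only [hfe, hkl, false_and, if_false, _root_.sum_apply, coordDual_apply_unit]
    exact sum_eq_zero fun i _ => if_neg fun h => hkl (h.1.symm.trans h.2)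

theorem sum_diag_mul_unit {G : Finset I} {j : I} (hj : j ∈ G) (k : I) :
    (∑ i ∈ G, e i i) * e j k = e j k := by
  simp [sum_mul, hM.1, hj]

end NormedSpace

section Algebra

variable {I : Type} [DecidableEq I] {M : Type} [NonUnitalNormedRing M] [NormedSpace ℂ M]
  [IsScalarTower ℂ M M] [SMulCommClass ℂ M M] {e : I → I → M} (hM : IsMatrixUnitsL1 I M e)
include hM

theorem sum_norm_unit_mul_le (G : Finset I) (f : I → I) (x : M) :
    ∑ i ∈ G, ‖e (f i) i * x‖ ≤ ‖x‖ := by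
  have hunit : ∀ p q, ∑ i ∈ G, ‖ContinuousLinearMap.mul ℂ M (e (f i) i) (e p q)‖ ≤ 1 := by
    intro p q
    simp only [ContinuousLinearMap.mul_apply', hM.1, apply_ite norm, norm_zero, hM.norm_unit,
      sum_ite_eq']
    split_ifs <;> norm_num
  simpa using hM.sum_norm_le_of_units _ G hunit x

theorem sum_norm_mul_unit_le (G : Finset I) (f : I → I) (x : M) :
    ∑ i ∈ G, ‖x * e i (f i)‖ ≤ ‖x‖ := by
  have hunit : ∀ p q, ∑ i ∈ G, ‖(ContinuousLinearMap.mul ℂ M).flip (e i (f i)) (e p q)‖ ≤ 1 := by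
    intro p q
    simp only [ContinuousLinearMap.flip_apply, ContinuousLinearMap.mul_apply', hM.1,
      apply_ite norm, norm_zero, hM.norm_unit, sum_ite_eq]
    split_ifs <;> norm_num
  simpa using hM.sum_norm_le_of_units _ G hunit x

theorem tendsto_sum_diag_mul (a : M) :
    Tendsto (fun G : Finset I => (∑ i ∈ G, e i i) * a) atTop (𝓝 a) := by
  rw [← tendsto_sub_nhds_zero_iff]
  refine tendsto_zero_of_dense_span
    (T := fun G => LinearMap.mulLeft ℂ (∑ i ∈ G, e i i) - LinearMap.id) (C := 2)
    (fun G x => ?_) hM.dense_span ?_ a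
  · calc ‖(∑ i ∈ G, e i i) * x - x‖ ≤ ∑ i ∈ G, ‖e i i * x‖ + ‖x‖ := by
          refine (norm_sub_le _ _).trans ?_
          gcongr
          rw [sum_mul]
          exact norm_sum_le _ _
      _ ≤ 2 * ‖x‖ := by linarith [hM.sum_norm_unit_mul_le G (fun i => i) x]
  · rintro _ ⟨⟨j, k⟩, rfl⟩
    refine tendsto_const_nhds.congr' ?_
    filter_upwards [eventually_ge_atTop {j}] with G hG
    simp [hM.sum_diag_mul_unit (hG (mem_singleton_self j))]

theorem commutatorMap_diagonalNet_unit (i₀ : I) {G : Finset I} {j k : I} (hj : j ∈ G)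
    (hk : k ∈ G) : commutatorMap (diagonalNet e i₀ G) (e j k) = 0 := by
  simp [commutatorMap_apply, diagonalNet, tsmulL_sum, tsmulR_sum, tsmulL_elemT, tsmulR_elemT,
    hM.1, elemT_ite_left, elemT_ite_right, hj, hk]

theorem norm_commutatorMap_diagonalNet_le (i₀ : I) (G : Finset I) (a : M) :
    ‖commutatorMap (diagonalNet e i₀ G) a‖ ≤ 2 * ‖a‖ := by
  rw [commutatorMap_apply, diagonalNet, tsmulL_sum, tsmulR_sum, ← sum_sub_distrib]
  calc ‖∑ i ∈ G, (tsmulL a (elemT (e i i₀) (e i₀ i)) - tsmulR a (elemT (e i i₀) (e i₀ i)))‖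
      ≤ ∑ i ∈ G, (‖a * e i i₀‖ + ‖e i₀ i * a‖) := by
        refine (norm_sum_le _ _).trans (sum_le_sum fun i _ => (norm_sub_le _ _).trans ?_)
        rw [tsmulL_elemT, tsmulR_elemT]
        gcongr
        · simpa [hM.norm_unit] using norm_elemT_le (a * e i i₀) (e i₀ i)
        · simpa [hM.norm_unit] using norm_elemT_le (e i i₀) (e i₀ i * a)
    _ ≤ ‖a‖ + ‖a‖ := by
        rw [sum_add_distrib]
        exact add_le_add (hM.sum_norm_mul_unit_le G (fun _ => i₀) a)
          (hM.sum_norm_unit_mul_le G (fun _ => i₀) a)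
    _ = 2 * ‖a‖ := by ring

theorem tendsto_commutatorMap_diagonalNet (i₀ : I) (a : M) :
    Tendsto (fun G => commutatorMap (diagonalNet e i₀ G) a) atTop (𝓝 0) := by
  refine tendsto_zero_of_dense_span (hM.norm_commutatorMap_diagonalNet_le i₀) hM.dense_span ?_ a
  rintro _ ⟨⟨j, k⟩, rfl⟩
  refine tendsto_const_nhds.congr' ?_
  filter_upwards [eventually_ge_atTop {j, k}] with G hG
  exact (hM.commutatorMap_diagonalNet_unit i₀ (hG (by simp)) (hG (by simp))).symm

theorem bsmulR_piSS_diagonalNet (i₀ : I) (G : Finset I) (a : M) :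
    bsmulR a (piSS (diagonalNet e i₀ G)) = inclB ((∑ i ∈ G, e i i) * a) := by
  simp only [diagonalNet, piSS_sum, piSS_elemT, hM.1, if_true, ← inclB_sum, bsmulR_inclB]

theorem pseudoAmenable [Nonempty I] : PseudoAmenable M := by
  obtain ⟨i₀⟩ := ‹Nonempty I›
  refine ⟨DirSys.ofSemilatticeSup (Finset I), diagonalNet e i₀, fun G => ?_, fun a => ?_,
    fun a => ?_⟩
  · exact Submodule.sum_mem _ fun i _ =>
      Submodule.le_topologicalClosure _ (Submodule.subset_span ⟨_, _, rfl⟩)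
  · exact DirSys.tendsto_ofSemilatticeSup_iff.mpr (hM.tendsto_commutatorMap_diagonalNet i₀ a)
  · refine DirSys.tendsto_ofSemilatticeSup_iff.mpr
      (.congr (fun G => (hM.bsmulR_piSS_diagonalNet i₀ G a).symm) ?_)
    exact ((NormedSpace.inclusionInDoubleDual ℂ M).continuous.tendsto a).comp
      (hM.tendsto_sum_diag_mul a)

theorem dualROp_unit_coordDual (i j k l : I) :
    dualROp M (e k l) (hM.coordDual i j) = if i = k then hM.coordDual l j else 0 := by
  refine hM.dual_ext fun p q => ?_
  change hM.coordDual i j (e k l * e p q) = (if i = k then hM.coordDual l j else 0) (e p q)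
  rw [hM.1]
  split_ifs <;> simp only [coordDual_apply_unit, zero_apply, map_zero] <;> grind

theorem dualLOp_unit_coordDual (i j k l : I) :
    dualLOp M (e k l) (hM.coordDual i j) = if j = l then hM.coordDual i k else 0 := by
  refine hM.dual_ext fun p q => ?_
  change hM.coordDual i j (e p q * e k l) = (if j = l then hM.coordDual i k else 0) (e p q)
  rw [hM.1]
  split_ifs <;> simp only [coordDual_apply_unit, zero_apply, map_zero] <;> grind

theorem apply_coordDual_diag_eq_zero [Infinite I] {Φ : Bidual M}
    (hΦ : ∀ a, bsmulL a Φ = bsmulR a Φ) (k : I) : Φ (hM.coordDual k k) = 0 := by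
  have hconst : ∀ u, Φ (hM.coordDual u u) = Φ (hM.coordDual k k) := fun u => by
    simpa [bsmulL, bsmulR, hM.dualROp_unit_coordDual, hM.dualLOp_unit_coordDual] using
      congrArg (fun Ψ : Bidual M => Ψ (hM.coordDual k u)) (hΦ (e k u))
  by_contra hne
  obtain ⟨n, hn⟩ := exists_nat_gt (‖Φ‖ / ‖Φ (hM.coordDual k k)‖)
  obtain ⟨S, hS⟩ := Infinite.exists_subset_card_eq I n
  have hbound : n * ‖Φ (hM.coordDual k k)‖ ≤ ‖Φ‖ :=
    calc n * ‖Φ (hM.coordDual k k)‖ = ‖Φ (∑ i ∈ S, hM.coordDual i i)‖ := by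
          simp [map_sum, hconst, hS]
      _ ≤ ‖Φ‖ * ‖∑ i ∈ S, hM.coordDual i i‖ := Φ.le_opNorm _
      _ ≤ ‖Φ‖ := mul_le_of_le_one_right Φ.opNorm_nonneg (hM.norm_sum_coordDual_diag_le S)
  rw [div_lt_iff₀ (norm_pos_iff.mpr hne)] at hn
  linarith

theorem not_strongPseudoAmenable [Infinite I] : ¬ StrongPseudoAmenable M := by
  rintro ⟨D, m, -, hcentral, hunit⟩
  obtain ⟨k⟩ := (inferInstance : Nonempty I)
  obtain ⟨α, hα⟩ := hunit (e k k) 1 one_pos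
  set ψ := bsmulR (e k k) (piSS (m α)) - inclB (e k k)
  have hψ : ψ (hM.coordDual k k) = -1 := by
    simp [ψ, bsmulR, inclB, hM.dualLOp_unit_coordDual,
      hM.apply_coordDual_diag_eq_zero (hcentral · α), hM.coordDual_apply_unit]
  have hψnorm : 1 ≤ ‖ψ‖ :=
    calc 1 = ‖ψ (hM.coordDual k k)‖ := by simp [hψ]
      _ ≤ ‖ψ‖ * ‖hM.coordDual k k‖ := ψ.le_opNorm _
      _ ≤ ‖ψ‖ := mul_le_of_le_one_right ψ.opNorm_nonneg (hM.norm_coordDual_le k k)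
  have hdist : dist (bsmulR (e k k) (piSS (m α))) (inclB (e k k)) < 1 := hα α (D.refl α)
  -- `DirSys.Tendsto` measures distances in `Bidual M` with `ContinuousLinearMap.toPseudoMetricSpace`,
  -- which `dist_eq_norm` only matches through this instance
  rw [@dist_eq_norm (Bidual M) ContinuousLinearMap.toSeminormedAddCommGroup] at hdist
  linarith

end Algebra

end IsMatrixUnitsL1

theorem pseudoAmenable_not_strongPseudoAmenable_matrixAlgebra_general
    (I : Type) [Infinite I] [DecidableEq I]
    (M : Type) [NonUnitalNormedRing M] [NormedSpace ℂ M] [IsScalarTower ℂ M M]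
    [SMulCommClass ℂ M M]
    (e : I → I → M) (hM : IsMatrixUnitsL1 I M e) :
    PseudoAmenable M ∧ ¬ StrongPseudoAmenable M :=
  ⟨hM.pseudoAmenable, hM.not_strongPseudoAmenable⟩

/-- For an infinite set `I`, the matrix algebra `M_I(ℂ)` is
pseudo-amenable but not strong pseudo-amenable. -/
theorem pseudoAmenable_not_strongPseudoAmenable_matrixAlgebra
    (I : Type) [Infinite I] [DecidableEq I]
    (M : Type) [NonUnitalNormedRing M] [NormedSpace ℂ M] [IsScalarTower ℂ M M]
    [SMulCommClass ℂ M M] [CompleteSpace M]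
    (e : I → I → M) (hM : IsMatrixUnitsL1 I M e) :
    PseudoAmenable M ∧ ¬ StrongPseudoAmenable M :=
  pseudoAmenable_not_strongPseudoAmenable_matrixAlgebra_general I M e hM
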